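/- Let ν ≥ 1 be an integer and let λ, γ, μ be real numbers with γ ≠ 0 and μ ≠ 0. Define ι₂ : ℝ^ν → E, where E = EuclideanSpace ℝ (Fin ν × Fin 3), by ι₂(t)(i, 0) = λ·tᵢ, ι₂(t)(i, 1) = γ·cos(μ·tᵢ), ι₂(t)(i, 2) = γ·sin(μ·tᵢ). Then there exists C > 0 such that for every t ∈ ℝ^ν and every v ∈ ℝ^ν, ‖v‖² ≤ C·‖(iteratedFDeriv ℝ 2 ι₂ t)(v, v)‖ (one may take C = √ν / (|γ|·μ²)). -/

import Mathlib

/-!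
The coiling map applies the helix `s ↦ (λ s, γ cos μs, γ sin μs)` in every coordinate, and the
acceleration of this helix has constant length `|γ| μ²`. So `D²ι₂(t)[v, v]` consists of the blocks
`vᵢ² · helix''(tᵢ)` and has norm `|γ| μ² (∑ vᵢ⁴)^(1/2)`, while Cauchy–Schwarz gives
`‖v‖² = ∑ vᵢ² ≤ √ν (∑ vᵢ⁴)^(1/2)`.
-/

/-- The coiling map `ι₂ : ℝ^ν → ℝ^{ν×3}`,
`t ↦ (λ tᵢ, γ cos(μ tᵢ), γ sin(μ tᵢ))_{i}`. -/
noncomputable def coilingMap (ν : ℕ) (l γ μ : ℝ) (t : EuclideanSpace ℝ (Fin ν)) :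
    EuclideanSpace ℝ (Fin ν × Fin 3) :=
  (WithLp.equiv 2 (Fin ν × Fin 3 → ℝ)).symm fun p =>
    ![l * t p.1, γ * Real.cos (μ * t p.1), γ * Real.sin (μ * t p.1)] p.2

open Real

namespace EuclideanSpace

variable {ι κ : Type*} [Fintype ι] [Fintype κ]

noncomputable def coordwiseMap (φ : κ → ℝ → ℝ) (t : EuclideanSpace ℝ ι) :
    EuclideanSpace ℝ (ι × κ) :=
  WithLp.toLp 2 fun p => φ p.2 (t p.1)

variable {φ : κ → ℝ → ℝ}

theorem contDiff_coordwiseMap {n : WithTop ℕ∞} (hφ : ∀ k, ContDiff ℝ n (φ k)) :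
    ContDiff ℝ n (coordwiseMap (ι := ι) φ) :=
  contDiff_euclidean.2 fun p => (hφ p.2).comp (proj (𝕜 := ℝ) p.1).contDiff

theorem iteratedFDeriv_coordwiseMap_apply {n : ℕ} (hφ : ∀ k, ContDiff ℝ n (φ k))
    (t : EuclideanSpace ℝ ι) (m : Fin n → EuclideanSpace ℝ ι) (p : ι × κ) :
    iteratedFDeriv ℝ n (coordwiseMap φ) t m p =
      (∏ j, m j p.1) * iteratedDeriv n (φ p.2) (t p.1) := by
  have hcomp : proj p ∘ coordwiseMap φ = φ p.2 ∘ proj (𝕜 := ℝ) p.1 := rfl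
  calc iteratedFDeriv ℝ n (coordwiseMap φ) t m p
      = iteratedFDeriv ℝ n (proj p ∘ coordwiseMap φ) t m := by
        rw [(proj p).iteratedFDeriv_comp_left (contDiff_coordwiseMap hφ).contDiffAt le_rfl]
        rfl
    _ = iteratedFDeriv ℝ n (φ p.2) (t p.1) (fun j => m j p.1) := by
        rw [hcomp, (proj p.1).iteratedFDeriv_comp_right (hφ p.2) t le_rfl]
        rfl
    _ = (∏ j, m j p.1) * iteratedDeriv n (φ p.2) (t p.1) :=
        iteratedFDeriv_apply_eq_iteratedDeriv_mul_prod

theorem norm_sq_iteratedFDeriv_two_coordwiseMap_diag (hφ : ∀ k, ContDiff ℝ 2 (φ k)) {c : ℝ}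
    (hφc : ∀ s, ∑ k, iteratedDeriv 2 (φ k) s ^ 2 = c ^ 2) (t v : EuclideanSpace ℝ ι) :
    ‖iteratedFDeriv ℝ 2 (coordwiseMap φ) t ![v, v]‖ ^ 2 = c ^ 2 * ∑ i, v i ^ 4 := by
  rw [norm_sq_eq, Fintype.sum_prod_type, Finset.mul_sum]
  refine Finset.sum_congr rfl fun i _ => ?_
  simp only [iteratedFDeriv_coordwiseMap_apply hφ, Fin.prod_univ_two, Matrix.cons_val_zero,
    Matrix.cons_val_one, Real.norm_eq_abs, sq_abs, mul_pow, ← Finset.mul_sum, hφc]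
  ring

theorem norm_pow_four_le_card_mul_sum (v : EuclideanSpace ℝ ι) :
    ‖v‖ ^ 4 ≤ Fintype.card ι * ∑ i, v i ^ 4 := by
  have h := sq_sum_le_card_mul_sum_sq (s := Finset.univ) (f := fun i => v i ^ 2)
  simp only [← pow_mul, Finset.card_univ] at h
  rw [show ‖v‖ ^ 4 = (‖v‖ ^ 2) ^ 2 by ring, norm_sq_eq]
  simpa only [Real.norm_eq_abs, sq_abs] using h

theorem sq_norm_le_mul_norm_iteratedFDeriv_two_coordwiseMap_diag
    (hφ : ∀ k, ContDiff ℝ 2 (φ k)) {c : ℝ} (hc : c ≠ 0)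
    (hφc : ∀ s, ∑ k, iteratedDeriv 2 (φ k) s ^ 2 = c ^ 2) (t v : EuclideanSpace ℝ ι) :
    ‖v‖ ^ 2 ≤ √(Fintype.card ι) / |c| * ‖iteratedFDeriv ℝ 2 (coordwiseMap φ) t ![v, v]‖ := by
  rw [div_mul_eq_mul_div, le_div_iff₀ (abs_pos.2 hc)]
  refine (pow_le_pow_iff_left₀ (by positivity) (by positivity) two_ne_zero).1 ?_
  calc (‖v‖ ^ 2 * |c|) ^ 2 = c ^ 2 * ‖v‖ ^ 4 := by rw [mul_pow, sq_abs]; ring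
    _ ≤ c ^ 2 * (Fintype.card ι * ∑ i, v i ^ 4) := by gcongr; exact norm_pow_four_le_card_mul_sum v
    _ = (√(Fintype.card ι) * ‖iteratedFDeriv ℝ 2 (coordwiseMap φ) t ![v, v]‖) ^ 2 := by
      rw [mul_pow, Real.sq_sqrt (Nat.cast_nonneg _),
        norm_sq_iteratedFDeriv_two_coordwiseMap_diag hφ hφc]
      ring

end EuclideanSpace

noncomputable def helixCoord (l γ μ : ℝ) (k : Fin 3) (s : ℝ) : ℝ :=
  ![l * s, γ * cos (μ * s), γ * sin (μ * s)] k

theorem coilingMap_eq_coordwiseMap (ν : ℕ) (l γ μ : ℝ) :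
    coilingMap ν l γ μ = EuclideanSpace.coordwiseMap (helixCoord l γ μ) :=
  rfl

theorem contDiff_helixCoord {n : WithTop ℕ∞} (l γ μ : ℝ) (k : Fin 3) :
    ContDiff ℝ n (helixCoord l γ μ k) := by
  unfold helixCoord
  fin_cases k <;>
    simp only [Fin.zero_eta, Fin.mk_one, Fin.reduceFinMk, Matrix.cons_val_zero, Matrix.cons_val_one,
      Matrix.cons_val] <;>
    fun_prop

theorem iteratedDeriv_two_helixCoord (l γ μ : ℝ) (k : Fin 3) (s : ℝ) :
    iteratedDeriv 2 (helixCoord l γ μ k) s =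
      ![0, -(γ * μ ^ 2 * cos (μ * s)), -(γ * μ ^ 2 * sin (μ * s))] k := by
  unfold helixCoord
  fin_cases k <;> simp [iteratedDeriv_const_mul_field _ (fun x : ℝ => x), iteratedDeriv_fun_id,
    iteratedDeriv_comp_const_mul contDiff_cos, iteratedDeriv_comp_const_mul contDiff_sin, mul_assoc]

theorem sum_sq_iteratedDeriv_two_helixCoord (l γ μ s : ℝ) :
    ∑ k, iteratedDeriv 2 (helixCoord l γ μ k) s ^ 2 = (γ * μ ^ 2) ^ 2 := by
  simp only [Fin.sum_univ_three, iteratedDeriv_two_helixCoord, Matrix.cons_val_zero,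
    Matrix.cons_val_one, Matrix.cons_val_two, Matrix.head_cons, Matrix.tail_cons]
  linear_combination (γ * μ ^ 2) ^ 2 * sin_sq_add_cos_sq (μ * s)

/-- Uniform lower bound for the diagonal of the second derivative of the coiling
map: if `γ ≠ 0` and `μ ≠ 0`, there is `C > 0` with
`‖v‖² ≤ C ‖D²ι₂(t)[v,v]‖` for all `t, v`. -/
theorem coilingMap_second_derivative_lower_bound (ν : ℕ) (hν : 1 ≤ ν) (l γ μ : ℝ)
    (hγ : γ ≠ 0) (hμ : μ ≠ 0) :
    ∃ C : ℝ, 0 < C ∧ ∀ (t v : EuclideanSpace ℝ (Fin ν)),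
      ‖v‖ ^ 2 ≤ C * ‖(iteratedFDeriv ℝ 2 (coilingMap ν l γ μ) t) ![v, v]‖ := by
  have hν₀ : (0 : ℝ) < ν := by exact_mod_cast hν
  refine ⟨√ν / (|γ| * μ ^ 2), by positivity, fun t v => ?_⟩
  have key := EuclideanSpace.sq_norm_le_mul_norm_iteratedFDeriv_two_coordwiseMap_diag
    (contDiff_helixCoord l γ μ) (mul_ne_zero hγ (pow_ne_zero 2 hμ))
    (sum_sq_iteratedDeriv_two_helixCoord l γ μ) t v
  rwa [Fintype.card_fin, abs_mul, abs_of_nonneg (sq_nonneg μ), ← coilingMap_eq_coordwiseMap]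
    at key
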